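/- arXiv:1905.05447 — 3 statements merged into one kernel-verified Lean document; each statement's English description precedes it below -/
import Mathlib

section
/- Let K be a field with the trivial absolute value and (V, ‖·‖) an ultrametrically normed finite-dimensional K-vector space. Then the number of distinct values taken by the norm, #{‖v‖ : v ∈ V}, is at most dim_K V + 1. -/
open Finset

/-- Norm of a sum of vectors with pairwise distinct norms equals the max. -/
lemma sum_norm_eq_sup' {V : Type*} [AddCommGroup V]
    (N : V → ℝ)
    (hmax : ∀ v w : V, N v ≠ N w → N (v + w) = max (N v) (N w)) :
    ∀ {ι : Type*} (s : Finset ι) (hs : s.Nonempty) (u : ι → V),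
      (∀ i ∈ s, ∀ j ∈ s, i ≠ j → N (u i) ≠ N (u j)) →
      N (∑ i ∈ s, u i) = s.sup' hs (fun i => N (u i)) := by
  intro ι s hs
  induction hs using Finset.Nonempty.cons_induction with
  | singleton a => intro u _; simp
  | cons a s ha hs ih =>
    intro u hdist
    have hIH : N (∑ i ∈ s, u i) = s.sup' hs (fun i => N (u i)) := by
      refine ih u fun i hi j hj hij => hdist i (mem_cons_of_mem hi) j (mem_cons_of_mem hj) hij
    obtain ⟨j, hj, hje⟩ := Finset.exists_mem_eq_sup' hs (fun i => N (u i))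
    have hne : N (u a) ≠ N (∑ i ∈ s, u i) := by
      rw [hIH, hje]
      exact hdist a (mem_cons_self a s) j (mem_cons_of_mem hj)
        (fun h => ha (h ▸ hj))
    rw [Finset.sum_cons, hmax _ _ hne, hIH, Finset.sup'_cons]

/-- In an ultrametrically normed finite-dimensional vector space over a trivially
valued field, the norm takes at most `dim V + 1` distinct values. -/
theorem stmt_1 {K V : Type*} [Field K] [AddCommGroup V] [Module K V]
    [FiniteDimensional K V]
    (N : V → ℝ)
    (hN0 : ∀ v : V, N v = 0 ↔ v = 0)
    (hNsmul : ∀ (a : K), a ≠ 0 → ∀ v : V, N (a • v) = N v)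
    (hNultra : ∀ v w : V, N (v + w) ≤ max (N v) (N w)) :
    (Set.range N).ncard ≤ Module.finrank K V + 1 := by
  have hzero : N 0 = 0 := (hN0 0).2 rfl
  have hneg : ∀ v : V, N (-v) = N v := by
    intro v
    rw [← neg_one_smul K v]
    exact hNsmul (-1) (by norm_num) v
  have hnonneg : ∀ v : V, 0 ≤ N v := by
    intro v
    have h := hNultra v (-v)
    rw [add_neg_cancel, hzero, hneg] at h
    rcases le_or_gt 0 (N v) with h' | h'
    · exact h'
    · simp [max_eq_left h'.le] at h; linarith
  -- distinct norms: norm of sum is max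
  have hmax : ∀ v w : V, N v ≠ N w → N (v + w) = max (N v) (N w) := by
    have key : ∀ v w : V, N w < N v → N (v + w) = N v := by
      intro v w hlt
      have h1 := hNultra v w
      rw [max_eq_left hlt.le] at h1
      rcases h1.lt_or_eq with h2 | h2
      · exfalso
        have h3 := hNultra (v + w) (-w)
        rw [add_neg_cancel_right, hneg] at h3
        have := max_lt h2 hlt
        linarith [le_max_left (N (v+w)) (N w)]
      · exact h2
    intro v w hne
    rcases hne.lt_or_gt with h | h
    · rw [add_comm, key w v h, max_eq_right h.le]
    · rw [key v w h, max_eq_left h.le]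
  -- set of nonzero norm values
  set T : Set ℝ := Set.range N \ {0} with hT
  -- choose preimages
  have hchoice : ∀ t : T, ∃ v : V, N v = (t : ℝ) := by
    rintro ⟨t, ⟨v, rfl⟩, ht⟩
    exact ⟨v, rfl⟩
  choose f hf using hchoice
  have hfne : ∀ t : T, N (f t) ≠ 0 := by
    intro t h
    have h2 := hf t
    rw [h] at h2
    exact t.2.2 h2.symm
  -- linear independence of f
  have hli : LinearIndependent K f := by
    classical
    rw [linearIndependent_iff']
    intro s g hsum i hi
    by_contra hgi
    set s' := s.filter (fun j => g j ≠ 0) with hs'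
    have hi' : i ∈ s' := Finset.mem_filter.2 ⟨hi, hgi⟩
    have hsum' : ∑ j ∈ s', g j • f j = 0 := by
      rw [hs', Finset.sum_filter_of_ne (fun j _ hj => by
        intro h; exact hj (by rw [h, zero_smul]))]
      exact hsum
    have hdist : ∀ a ∈ s', ∀ b ∈ s', a ≠ b → N (g a • f a) ≠ N (g b • f b) := by
      intro a ha b hb hab
      rw [hNsmul (g a) (Finset.mem_filter.1 ha).2, hNsmul (g b) (Finset.mem_filter.1 hb).2,
        hf a, hf b]
      exact fun h => hab (Subtype.ext h)
    have hNsum := sum_norm_eq_sup' N hmax s' ⟨i, hi'⟩ (fun j => g j • f j) hdist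
    rw [hsum', hzero] at hNsum
    obtain ⟨j, hj, hje⟩ := Finset.exists_mem_eq_sup' (⟨i, hi'⟩ : s'.Nonempty)
      (fun j => N (g j • f j))
    rw [hje, hNsmul (g j) (Finset.mem_filter.1 hj).2] at hNsum
    exact hfne j hNsum.symm
  have hfinT : Finite T := hli.finite
  have hTfin : T.Finite := Set.toFinite T
  have hcard : T.ncard ≤ Module.finrank K V := by
    rw [← Nat.card_coe_set_eq]
    have h1 : (Cardinal.mk ↥T) ≤ (Module.finrank K V : Cardinal) := hli.cardinalMk_le_finrank
    have := Cardinal.toNat_le_toNat h1 (Cardinal.nat_lt_aleph0 _)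
    simpa [Nat.card, Cardinal.toNat_natCast] using this
  have hsub : Set.range N ⊆ insert 0 T := by
    rintro x ⟨v, rfl⟩
    rcases eq_or_ne (N v) 0 with h | h
    · exact Or.inl h
    · exact Or.inr ⟨⟨v, rfl⟩, h⟩
  calc (Set.range N).ncard ≤ (insert (0:ℝ) T).ncard :=
        Set.ncard_le_ncard hsub (hTfin.insert 0)
    _ ≤ T.ncard + 1 := Set.ncard_insert_le 0 T
    _ ≤ Module.finrank K V + 1 := by omega
end

section
/- Let K be a trivially valued field and (V, ‖·‖) an ultrametrically normed finite-dimensional K-vector space with V ≠ {0}. Then λ_max(V) := sup{t ∈ ℝ : Filᵗ(V) ≠ {0}} is attained as a maximum, i.e., there exists v ∈ V \ {0} with ‖v‖ ≤ e^{-λ_max(V)}. -/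
/-- For a nonzero ultrametrically normed finite-dimensional space over a trivially
valued field, `λ_max(V) = sup {t : Fil^t V ≠ 0}` is attained: there is a nonzero
vector `v` with `‖v‖ ≤ e^{-λ_max(V)}`. -/
theorem stmt_5 {K V : Type*} [Field K] [AddCommGroup V] [Module K V]
    [FiniteDimensional K V] [Nontrivial V]
    (N : V → ℝ)
    (hN0 : ∀ v : V, N v = 0 ↔ v = 0)
    (hNsmul : ∀ (a : K), a ≠ 0 → ∀ v : V, N (a • v) = N v)
    (hNultra : ∀ v w : V, N (v + w) ≤ max (N v) (N w)) :
    ∃ v : V, v ≠ 0 ∧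
      N v ≤ Real.exp (-(sSup {t : ℝ | ∃ w : V, w ≠ 0 ∧ N w ≤ Real.exp (-t)})) := by
  set S : Set ℝ := {t : ℝ | ∃ w : V, w ≠ 0 ∧ N w ≤ Real.exp (-t)} with hS
  -- N is nonnegative
  have hN0' : N 0 = 0 := (hN0 0).mpr rfl
  have hneg : ∀ v : V, N (-v) = N v := by
    intro v
    have := hNsmul (-1 : K) (by norm_num) v
    simpa using this
  have hnonneg : ∀ v : V, 0 ≤ N v := by
    intro v
    have h := hNultra v (-v)
    rw [add_neg_cancel, hN0', hneg] at h
    simpa using h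
  have hpos : ∀ v : V, v ≠ 0 → 0 < N v := by
    intro v hv
    rcases lt_or_eq_of_le (hnonneg v) with h | h
    · exact h
    · exact absurd ((hN0 v).mp h.symm) hv
  -- the filtration submodules
  set W : ℝ → Submodule K V := fun t =>
    { carrier := {v | N v ≤ Real.exp (-t)}
      add_mem' := fun {a b} ha hb => le_trans (hNultra a b) (max_le ha hb)
      zero_mem' := by simp [hN0', Real.exp_pos]; exact (Real.exp_pos _).le
      smul_mem' := by
        intro c x hx
        rcases eq_or_ne c 0 with rfl | hc
        · simpa [hN0'] using (Real.exp_pos (-t)).le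
        · simpa [hNsmul c hc x] using hx } with hW
  have hWmem : ∀ (t : ℝ) (v : V), v ∈ W t ↔ N v ≤ Real.exp (-t) := fun t v => Iff.rfl
  have hWmono : ∀ {s t : ℝ}, s ≤ t → W t ≤ W s := by
    intro s t hst v hv
    exact le_trans hv (Real.exp_le_exp.mpr (by linarith))
  -- S is nonempty
  obtain ⟨w, hw⟩ := exists_ne (0 : V)
  have hSne : S.Nonempty := by
    refine ⟨-Real.log (N w), w, hw, ?_⟩
    rw [neg_neg, Real.exp_log (hpos w hw)]
  -- pick t₀ ∈ S minimizing finrank (W t₀)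
  have hDne : ((fun t => Module.finrank K (W t)) '' S).Nonempty := hSne.image _
  obtain ⟨t₀, ht₀S, ht₀d⟩ := Nat.sInf_mem hDne
  obtain ⟨v, hv0, hvN⟩ := ht₀S
  have hvW : v ∈ W t₀ := hvN
  -- key: every t ∈ S satisfies t ≤ -log (N v)
  have hbound : ∀ t ∈ S, t ≤ -Real.log (N v) := by
    intro t ht
    have hNvt : N v ≤ Real.exp (-t) := by
      rcases le_or_gt t t₀ with h | h
      · exact le_trans hvN (Real.exp_le_exp.mpr (by linarith))
      · -- W t = W t₀ by minimality of finrank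
        have hle : W t ≤ W t₀ := hWmono h.le
        have hfr : Module.finrank K (W t₀) ≤ Module.finrank K (W t) :=
          le_trans (le_of_eq ht₀d) (Nat.sInf_le ⟨t, ht, rfl⟩)
        have heq : W t = W t₀ := Submodule.eq_of_le_of_finrank_le hle hfr
        have : v ∈ W t := heq ▸ hvW
        exact this
    have := (Real.log_le_iff_le_exp (hpos v hv0)).mpr hNvt
    linarith
  have hsup : sSup S ≤ -Real.log (N v) := csSup_le hSne hbound
  refine ⟨v, hv0, ?_⟩
  calc N v = Real.exp (Real.log (N v)) := (Real.exp_log (hpos v hv0)).symm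
    _ ≤ Real.exp (-sSup S) := Real.exp_le_exp.mpr (by linarith)
end

section
/- Let d ≥ 1. Suppose Φ, Φ', Φ_ε : ℝ → [0, ∞) are integrable functions such that Φ_ε(εx + (1−ε)y) ≥ Φ(x)^ε · Φ'(y)^{1−ε} for all x, y ∈ ℝ and a fixed 0 < ε < 1. Then ∫ Φ_ε ≥ min{∫ Φ, ∫ Φ'}. -/
/-!
For `s, t ≥ 0` the level set `{Φε > s ^ ε * t ^ (1 - ε)}` contains
`ε • {Φ > s} + (1 - ε) • {Φ' > t}`, so the one-dimensional Brunn–Minkowski inequality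
`|K| + |L| ≤ |K + L|` (translate `K` and `L` until they touch in a single point) bounds its
measure from below. Integrability of `Φε` and Markov's inequality then force `Φ` and `Φ'` to have
finite essential suprema. Rescaled so that both essential suprema are `1`, integrating the level
set bound over `s = t` (layer-cake formula) gives `ε ∫ Φ + (1 - ε) ∫ Φ' ≤ ∫ Φε`; undoing the
scaling with the weighted AM–GM inequality yields the Prékopa–Leindler inequality
`(∫ Φ) ^ ε * (∫ Φ') ^ (1 - ε) ≤ ∫ Φε`, whose left side dominates `min (∫ Φ) (∫ Φ')`.
-/

open MeasureTheory Set Filter Real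
open scoped Pointwise ENNReal

namespace Real

theorem volume_add_volume_le_volume_add_of_isCompact {K L : Set ℝ} (hK : IsCompact K)
    (hL : IsCompact L) (hK₀ : K.Nonempty) (hL₀ : L.Nonempty) :
    volume K + volume L ≤ volume (K + L) := by
  set a := sSup K
  set b := sInf L
  have hsub : (b +ᵥ K) ∪ (a +ᵥ L) ⊆ K + L := by
    rintro _ (⟨x, hx, rfl⟩ | ⟨y, hy, rfl⟩)
    · show b + x ∈ K + L
      rw [add_comm b x]
      exact add_mem_add hx (hL.sInf_mem hL₀)
    · exact add_mem_add (hK.sSup_mem hK₀) hy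
  -- the translate `b +ᵥ K` lies left of `a + b`, the translate `a +ᵥ L` right of it
  have hinter : (b +ᵥ K) ∩ (a +ᵥ L) ⊆ {a + b} := by
    rintro _ ⟨⟨x, hx, rfl⟩, ⟨y, hy, hxy⟩⟩
    have hxa : x ≤ a := le_csSup hK.bddAbove hx
    have hby : b ≤ y := csInf_le hL.bddBelow hy
    simp only [vadd_eq_add] at hxy ⊢
    rw [mem_singleton_iff]
    linarith
  calc volume K + volume L = volume (b +ᵥ K) + volume (a +ᵥ L) := by
        rw [measure_vadd, measure_vadd]
    _ = volume ((b +ᵥ K) ∪ (a +ᵥ L)) + volume ((b +ᵥ K) ∩ (a +ᵥ L)) :=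
        (measure_union_add_inter _ (hL.vadd a).measurableSet).symm
    _ = volume ((b +ᵥ K) ∪ (a +ᵥ L)) := by
        rw [measure_mono_null hinter (measure_singleton _), add_zero]
    _ ≤ volume (K + L) := measure_mono hsub

theorem volume_add_volume_le_volume_add {S T : Set ℝ} (hS : NullMeasurableSet S)
    (hT : NullMeasurableSet T) (hS₀ : S.Nonempty) (hT₀ : T.Nonempty) :
    volume S + volume T ≤ volume (S + T) := by
  obtain ⟨x₀, hx₀⟩ := hS₀
  obtain ⟨y₀, hy₀⟩ := hT₀
  have hcompact : ∀ K, K ⊆ S ∧ IsCompact K → ∀ L, L ⊆ T ∧ IsCompact L →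
      volume K + volume L ≤ volume (S + T) := by
    rintro K ⟨hKS, hK⟩ L ⟨hLT, hL⟩
    calc volume K + volume L ≤ volume (insert x₀ K) + volume (insert y₀ L) := by
          gcongr <;> exact subset_insert _ _
      _ ≤ volume (insert x₀ K + insert y₀ L) :=
          volume_add_volume_le_volume_add_of_isCompact (hK.insert x₀) (hL.insert y₀)
            (insert_nonempty _ _) (insert_nonempty _ _)
      _ ≤ volume (S + T) :=
          measure_mono (add_subset_add (insert_subset hx₀ hKS) (insert_subset hy₀ hLT))
  obtain ⟨S', hS'S, hS', hS'ae⟩ := hS.exists_measurable_subset_ae_eq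
  obtain ⟨T', hT'T, hT', hT'ae⟩ := hT.exists_measurable_subset_ae_eq
  rw [← measure_congr hS'ae, ← measure_congr hT'ae, hS'.measure_eq_iSup_isCompact,
    hT'.measure_eq_iSup_isCompact]
  simp only [iSup_and']
  exact ENNReal.biSup_add_biSup_le' ⟨∅, empty_subset _, isCompact_empty⟩
    ⟨∅, empty_subset _, isCompact_empty⟩ fun K hK L hL =>
      hcompact K ⟨hK.1.trans hS'S, hK.2⟩ L ⟨hL.1.trans hT'T, hL.2⟩

theorem ofReal_mul_volume_add_le_volume_smul_add_smul {a b : ℝ} (ha : 0 ≤ a) (hb : 0 ≤ b)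
    {S T : Set ℝ} (hS : NullMeasurableSet S) (hT : NullMeasurableSet T) (hS₀ : S.Nonempty)
    (hT₀ : T.Nonempty) :
    ENNReal.ofReal a * volume S + ENNReal.ofReal b * volume T ≤ volume (a • S + b • T) := by
  simpa [abs_of_nonneg ha, abs_of_nonneg hb] using
    volume_add_volume_le_volume_add (Measure.NullMeasurableSet.const_smul hS a)
      (Measure.NullMeasurableSet.const_smul hT b) (hS₀.image _) (hT₀.image _)

end Real

def IsEssSup (f : ℝ → ℝ) (A : ℝ) : Prop :=
  (∀ s < A, volume {x | s < f x} ≠ 0) ∧ ∀ s, A < s → volume {x | s < f x} = 0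

theorem IsEssSup.le_of_volume_ne_zero {f : ℝ → ℝ} {A t : ℝ} (hA : IsEssSup f A)
    (ht : volume {x | t < f x} ≠ 0) : t ≤ A :=
  le_of_not_gt fun hAt => ht (hA.2 t hAt)

theorem IsEssSup.div_const {f : ℝ → ℝ} {A c : ℝ} (hA : IsEssSup f A) (hc : 0 < c) :
    IsEssSup (fun x => f x / c) (A / c) := by
  have hlevel : ∀ s, {x | s < f x / c} = {x | s * c < f x} := fun s => by
    ext x; simp only [mem_ofPred_eq, lt_div_iff₀ hc]
  refine ⟨fun s hs => ?_, fun s hs => ?_⟩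
  · rw [hlevel]; exact hA.1 _ ((lt_div_iff₀ hc).1 hs)
  · rw [hlevel]; exact hA.2 _ ((div_lt_iff₀ hc).1 hs)

theorem exists_isEssSup {f : ℝ → ℝ} (hbdd : ∃ s, volume {x | s < f x} = 0)
    (hne : ∃ t, volume {x | t < f x} ≠ 0) : ∃ A, IsEssSup f A := by
  obtain ⟨t, ht⟩ := hne
  set Z := {s | volume {x | s < f x} = 0}
  have hZ : BddBelow Z := ⟨t, fun s hs => le_of_not_gt fun hst =>
    ht (measure_mono_null (fun x hx => hst.trans hx) hs)⟩
  refine ⟨sInf Z, fun s hs hs0 => (csInf_le hZ hs0).not_gt hs, fun s hs => ?_⟩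
  obtain ⟨s', hs'Z, hs's⟩ := exists_lt_of_csInf_lt hbdd hs
  exact measure_mono_null (fun x hx => hs's.trans hx) hs'Z

theorem exists_volume_levelSet_ne_zero_of_integral_pos {f : ℝ → ℝ} (hf0 : ∀ x, 0 ≤ f x)
    (hf : AEMeasurable f) (hpos : 0 < ∫ x, f x) : ∃ t, 0 < t ∧ volume {x | t < f x} ≠ 0 := by
  by_contra! hnull
  have hzero : ∫⁻ x, ENNReal.ofReal (f x) = 0 := by
    rw [lintegral_eq_lintegral_meas_lt volume (ae_of_all _ hf0) hf,
      setLIntegral_congr_fun measurableSet_Ioi hnull, lintegral_zero]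
  rw [integral_eq_lintegral_of_nonneg_ae (ae_of_all _ hf0) hf.aestronglyMeasurable, hzero] at hpos
  simp at hpos

theorem min_le_rpow_mul_rpow {a b w₁ w₂ : ℝ} (ha : 0 ≤ a) (hb : 0 ≤ b) (hw₁ : 0 ≤ w₁)
    (hw₂ : 0 ≤ w₂) (hw : w₁ + w₂ = 1) : min a b ≤ a ^ w₁ * b ^ w₂ :=
  calc min a b = min a b ^ w₁ * min a b ^ w₂ := by
        rw [← rpow_add' (le_min ha hb) (by simp [hw]), hw, rpow_one]
    _ ≤ a ^ w₁ * b ^ w₂ := by gcongr <;> simp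

theorem rpow_mul_rpow_le_of_add_div_le {ε a b c A B : ℝ} (hε0 : 0 ≤ ε) (hε1 : ε ≤ 1)
    (ha : 0 ≤ a) (hb : 0 ≤ b) (hA : 0 < A) (hB : 0 < B)
    (h : ε * (a / A) + (1 - ε) * (b / B) ≤ c / (A ^ ε * B ^ (1 - ε))) :
    a ^ ε * b ^ (1 - ε) ≤ c := by
  have hC : 0 < A ^ ε * B ^ (1 - ε) := by positivity
  calc a ^ ε * b ^ (1 - ε) = A ^ ε * B ^ (1 - ε) * ((a / A) ^ ε * (b / B) ^ (1 - ε)) := by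
        rw [div_rpow ha hA.le, div_rpow hb hB.le]
        field_simp
    _ ≤ A ^ ε * B ^ (1 - ε) * (ε * (a / A) + (1 - ε) * (b / B)) := by
        gcongr
        exact geom_mean_le_arith_mean2_weighted hε0 (sub_nonneg.2 hε1) (by positivity)
          (by positivity) (add_sub_cancel ε 1)
    _ ≤ c := (le_div_iff₀' hC).1 h

section PrekopaLeindler

variable {ε : ℝ} {f g h : ℝ → ℝ}

theorem ofReal_mul_volume_levelSet_add_le (hε0 : 0 < ε) (hε1 : ε < 1) (hf : AEMeasurable f)
    (hg : AEMeasurable g) (hfgh : ∀ x y, f x ^ ε * g y ^ (1 - ε) ≤ h (ε * x + (1 - ε) * y))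
    {s t : ℝ} (hs : 0 ≤ s) (ht : 0 ≤ t) (hfs : {x | s < f x}.Nonempty)
    (hgt : {x | t < g x}.Nonempty) :
    ENNReal.ofReal ε * volume {x | s < f x} + ENNReal.ofReal (1 - ε) * volume {x | t < g x} ≤
      volume {x | s ^ ε * t ^ (1 - ε) < h x} := by
  refine (ofReal_mul_volume_add_le_volume_smul_add_smul hε0.le (sub_nonneg.2 hε1.le)
    (nullMeasurableSet_lt aemeasurable_const hf) (nullMeasurableSet_lt aemeasurable_const hg)
    hfs hgt).trans (measure_mono ?_)
  rintro _ ⟨_, ⟨x, hx, rfl⟩, _, ⟨y, hy, rfl⟩, rfl⟩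
  calc s ^ ε * t ^ (1 - ε) < f x ^ ε * g y ^ (1 - ε) :=
        mul_lt_mul'' (rpow_lt_rpow hs hx hε0) (rpow_lt_rpow ht hy (sub_pos.2 hε1))
          (rpow_nonneg hs _) (rpow_nonneg ht _)
    _ ≤ h (ε * x + (1 - ε) * y) := hfgh x y

theorem exists_volume_levelSet_eq_zero (hε0 : 0 < ε) (hε1 : ε < 1) (hf : AEMeasurable f)
    (hg : AEMeasurable g) (hh : Integrable h)
    (hfgh : ∀ x y, f x ^ ε * g y ^ (1 - ε) ≤ h (ε * x + (1 - ε) * y))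
    {t : ℝ} (ht : 0 < t) (hgt : volume {x | t < g x} ≠ 0) :
    ∃ s, volume {x | s < f x} = 0 := by
  by_contra! hfs
  set m := ENNReal.ofReal (1 - ε) * volume {x | t < g x}
  have hm : m ≠ 0 := mul_ne_zero (ENNReal.ofReal_pos.2 (sub_pos.2 hε1)).ne' hgt
  -- Markov's inequality against arbitrarily high level sets of `h` of measure at least `m`
  have hlarge : ∀ n : ℕ, (n : ℝ≥0∞) * m ≤ ∫⁻ x, ENNReal.ofReal (h x) := fun n => by
    obtain ⟨s, hsn, hs⟩ := (((tendsto_rpow_atTop hε0).atTop_mul_const (rpow_pos_of_pos ht _)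
      ).eventually_ge_atTop (n : ℝ)).and (eventually_ge_atTop 0) |>.exists
    set c := s ^ ε * t ^ (1 - ε)
    calc (n : ℝ≥0∞) * m ≤ ENNReal.ofReal c * volume {x | c < h x} := by
          rw [← ENNReal.ofReal_natCast]
          gcongr
          exact le_add_self.trans (ofReal_mul_volume_levelSet_add_le hε0 hε1 hf hg hfgh hs ht.le
            (nonempty_of_measure_ne_zero (hfs s)) (nonempty_of_measure_ne_zero hgt))
      _ ≤ ENNReal.ofReal c * volume {x | ENNReal.ofReal c ≤ ENNReal.ofReal (h x)} :=
          mul_le_mul_right (measure_mono fun x hx => ENNReal.ofReal_le_ofReal hx.le) _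
      _ ≤ ∫⁻ x, ENNReal.ofReal (h x) :=
          mul_meas_ge_le_lintegral₀ hh.aemeasurable.ennreal_ofReal _
  have htop := iSup_le hlarge
  rw [← ENNReal.iSup_mul, ENNReal.iSup_natCast, ENNReal.top_mul hm, top_le_iff] at htop
  exact hh.lintegral_lt_top.ne htop

theorem lintegral_add_le_of_isEssSup (hε0 : 0 < ε) (hε1 : ε < 1) (hf : AEMeasurable f)
    (hg : AEMeasurable g) (hh : AEMeasurable h) (hf0 : ∀ x, 0 ≤ f x) (hg0 : ∀ x, 0 ≤ g x)
    (hh0 : ∀ x, 0 ≤ h x) {M : ℝ} (hfM : IsEssSup f M) (hgM : IsEssSup g M)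
    (hfgh : ∀ x y, f x ^ ε * g y ^ (1 - ε) ≤ h (ε * x + (1 - ε) * y)) :
    ENNReal.ofReal ε * (∫⁻ x, ENNReal.ofReal (f x)) +
      ENNReal.ofReal (1 - ε) * (∫⁻ x, ENNReal.ofReal (g x)) ≤ ∫⁻ x, ENNReal.ofReal (h x) := by
  rw [lintegral_eq_lintegral_meas_lt volume (ae_of_all _ hf0) hf,
    lintegral_eq_lintegral_meas_lt volume (ae_of_all _ hg0) hg,
    lintegral_eq_lintegral_meas_lt volume (ae_of_all _ hh0) hh,
    ← lintegral_const_mul' _ _ ENNReal.ofReal_ne_top,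
    ← lintegral_const_mul' _ _ ENNReal.ofReal_ne_top]
  refine (le_lintegral_add _ _).trans (lintegral_mono_ae ?_)
  filter_upwards [ae_restrict_mem measurableSet_Ioi, ae_restrict_of_ae (Measure.ae_ne volume M)]
    with t (ht : 0 < t) htM
  rcases htM.lt_or_gt with htM | htM
  · simpa only [← rpow_add ht, add_sub_cancel, rpow_one] using
      ofReal_mul_volume_levelSet_add_le hε0 hε1 hf hg hfgh ht.le ht.le
        (nonempty_of_measure_ne_zero (hfM.1 t htM)) (nonempty_of_measure_ne_zero (hgM.1 t htM))
  · simp [hfM.2 t htM, hgM.2 t htM]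

theorem integral_add_le_of_isEssSup (hε0 : 0 < ε) (hε1 : ε < 1) (hf : Integrable f)
    (hg : Integrable g) (hh : Integrable h) (hf0 : ∀ x, 0 ≤ f x) (hg0 : ∀ x, 0 ≤ g x)
    (hh0 : ∀ x, 0 ≤ h x) {M : ℝ} (hfM : IsEssSup f M) (hgM : IsEssSup g M)
    (hfgh : ∀ x y, f x ^ ε * g y ^ (1 - ε) ≤ h (ε * x + (1 - ε) * y)) :
    ε * (∫ x, f x) + (1 - ε) * ∫ x, g x ≤ ∫ x, h x := by
  have key := lintegral_add_le_of_isEssSup hε0 hε1 hf.aemeasurable hg.aemeasurable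
    hh.aemeasurable hf0 hg0 hh0 hfM hgM hfgh
  rw [← ofReal_integral_eq_lintegral_ofReal hf (ae_of_all _ hf0),
    ← ofReal_integral_eq_lintegral_ofReal hg (ae_of_all _ hg0),
    ← ofReal_integral_eq_lintegral_ofReal hh (ae_of_all _ hh0),
    ← ENNReal.ofReal_mul hε0.le, ← ENNReal.ofReal_mul (sub_nonneg.2 hε1.le),
    ← ENNReal.ofReal_add (mul_nonneg hε0.le (integral_nonneg hf0))
      (mul_nonneg (sub_nonneg.2 hε1.le) (integral_nonneg hg0))] at key
  exact (ENNReal.ofReal_le_ofReal_iff (integral_nonneg hh0)).1 key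

theorem rpow_integral_mul_rpow_integral_le_integral (hε0 : 0 < ε) (hε1 : ε < 1)
    (hf : Integrable f) (hg : Integrable g) (hh : Integrable h) (hf0 : ∀ x, 0 ≤ f x)
    (hg0 : ∀ x, 0 ≤ g x) (hh0 : ∀ x, 0 ≤ h x)
    (hfgh : ∀ x y, f x ^ ε * g y ^ (1 - ε) ≤ h (ε * x + (1 - ε) * y)) :
    (∫ x, f x) ^ ε * (∫ x, g x) ^ (1 - ε) ≤ ∫ x, h x := by
  rcases (integral_nonneg hf0 : 0 ≤ ∫ x, f x).eq_or_lt with hF | hF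
  · rw [← hF, zero_rpow hε0.ne', zero_mul]; exact integral_nonneg hh0
  rcases (integral_nonneg hg0 : 0 ≤ ∫ x, g x).eq_or_lt with hG | hG
  · rw [← hG, zero_rpow (sub_pos.2 hε1).ne', mul_zero]; exact integral_nonneg hh0
  obtain ⟨s, hs, hfs⟩ := exists_volume_levelSet_ne_zero_of_integral_pos hf0 hf.aemeasurable hF
  obtain ⟨t, ht, hgt⟩ := exists_volume_levelSet_ne_zero_of_integral_pos hg0 hg.aemeasurable hG
  have hgfh : ∀ x y, g x ^ (1 - ε) * f y ^ (1 - (1 - ε)) ≤ h ((1 - ε) * x + (1 - (1 - ε)) * y) :=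
    fun x y => by rw [sub_sub_cancel, mul_comm, add_comm]; exact hfgh y x
  obtain ⟨A, hA⟩ := exists_isEssSup (exists_volume_levelSet_eq_zero hε0 hε1 hf.aemeasurable
    hg.aemeasurable hh hfgh ht hgt) ⟨s, hfs⟩
  obtain ⟨B, hB⟩ := exists_isEssSup (exists_volume_levelSet_eq_zero (sub_pos.2 hε1)
    (sub_lt_self 1 hε0) hg.aemeasurable hf.aemeasurable hh hgfh hs hfs) ⟨t, hgt⟩
  have hA0 : 0 < A := hs.trans_le (hA.le_of_volume_ne_zero hfs)
  have hB0 : 0 < B := ht.trans_le (hB.le_of_volume_ne_zero hgt)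
  have hC0 : 0 < A ^ ε * B ^ (1 - ε) := by positivity
  -- rescale `f`, `g`, `h` so that `f` and `g` both have essential supremum `1`
  have hnormalized := integral_add_le_of_isEssSup hε0 hε1 (hf.div_const A) (hg.div_const B)
    (hh.div_const _) (fun x => div_nonneg (hf0 x) hA0.le) (fun x => div_nonneg (hg0 x) hB0.le)
    (fun x => div_nonneg (hh0 x) hC0.le) (div_self hA0.ne' ▸ hA.div_const hA0)
    (div_self hB0.ne' ▸ hB.div_const hB0) fun x y => by
      rw [div_rpow (hf0 x) hA0.le, div_rpow (hg0 y) hB0.le, div_mul_div_comm]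
      exact div_le_div_of_nonneg_right (hfgh x y) hC0.le
  rw [integral_div, integral_div, integral_div] at hnormalized
  exact rpow_mul_rpow_le_of_add_div_le hε0.le hε1.le hF.le hG.le hA0 hB0 hnormalized

end PrekopaLeindler

/-- One-dimensional Prékopa–Leindler combined with `A^ε B^{1-ε} ≥ min{A,B}`:
the integral of `Φ_ε` is at least the min of the integrals of `Φ` and `Φ'`. -/
theorem stmt_13 (ε : ℝ) (hε0 : 0 < ε) (hε1 : ε < 1)
    (Φ Φ' Φε : ℝ → ℝ)
    (hΦ : Integrable Φ) (hΦ' : Integrable Φ') (hΦε : Integrable Φε)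
    (hΦ0 : ∀ x, 0 ≤ Φ x) (hΦ'0 : ∀ x, 0 ≤ Φ' x) (hΦε0 : ∀ x, 0 ≤ Φε x)
    (hyp : ∀ x y : ℝ, Φ x ^ ε * Φ' y ^ (1 - ε) ≤ Φε (ε * x + (1 - ε) * y)) :
    min (∫ x, Φ x) (∫ x, Φ' x) ≤ ∫ x, Φε x :=
  (min_le_rpow_mul_rpow (integral_nonneg hΦ0) (integral_nonneg hΦ'0) hε0.le
    (sub_nonneg.2 hε1.le) (add_sub_cancel ε 1)).trans
    (rpow_integral_mul_rpow_integral_le_integral hε0 hε1 hΦ hΦ' hΦε hΦ0 hΦ'0 hΦε0 hyp)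
end
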